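/- arXiv:1407.7910 — 6 statements merged into one kernel-verified Lean document; each statement's English description precedes it below -/
import Mathlib

section
/- Let G be a subgroup of the group of orientation-preserving homeomorphisms of the interval I = [0,1] with the property that for every nonempty open set U ⊆ I there exists a non-identity element g_U ∈ G fixing I \ U pointwise. Let W ⊆ I be open and let f ∈ G. If f commutes with g_{W'} for every nonempty open W' ⊆ W, then f fixes W pointwise. -/
open Set

/-- The unit interval `[0,1]` as a subspace of `ℝ`. -/
abbrev I01 : Set ℝ := Set.Icc (0 : ℝ) 1

/-- The group of self-homeomorphisms of `I = [0,1]`, with multiplication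
`f * g = f ∘ g`. -/
instance : Group (I01 ≃ₜ I01) where
  mul f g := g.trans f
  one := Homeomorph.refl I01
  inv := Homeomorph.symm
  mul_assoc f g h := Homeomorph.ext fun x => rfl
  one_mul f := Homeomorph.ext fun x => rfl
  mul_one f := Homeomorph.ext fun x => rfl
  inv_mul_cancel f := Homeomorph.ext fun x => f.symm_apply_apply x

/-! If `f x ≠ x`, a small open neighbourhood `U` of `x` is moved off itself by `f`. Then
`g = gU (W ∩ U)` is supported in `U`, while `f g f⁻¹ = g` is supported in `f U`, which is disjoint
from `U`; so `g` fixes everything, contradicting `g ≠ 1`. -/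

theorem exists_isOpen_disjoint_preimage_of_apply_ne {X : Type*} [TopologicalSpace X]
    [T2Space X] {f : X → X} (hf : Continuous f) {x : X} (hx : f x ≠ x) :
    ∃ U : Set X, IsOpen U ∧ x ∈ U ∧ Disjoint U (f ⁻¹' U) := by
  obtain ⟨V, V', hV, hV', hxV, hfxV', hVV'⟩ := t2_separation hx.symm
  refine ⟨V ∩ f ⁻¹' V', hV.inter (hV'.preimage hf), ⟨hxV, hfxV'⟩, ?_⟩
  rw [Set.disjoint_left]
  rintro y ⟨-, hfyV'⟩ ⟨hfyV, -⟩
  exact Set.disjoint_left.mp hVV' hfyV hfyV'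

theorem eq_self_of_commute_of_disjoint_preimage {α : Type*} {f g : α → α} {U : Set α}
    (hf : Function.Surjective f) (hcomm : ∀ y, f (g y) = g (f y))
    (hg : ∀ y ∉ U, g y = y) (hU : Disjoint U (f ⁻¹' U)) (y : α) : g y = y := by
  by_cases hy : y ∈ U
  · obtain ⟨z, rfl⟩ := hf y
    have hz : z ∉ U := fun hz => Set.disjoint_left.mp hU hz hy
    rw [← hcomm, hg z hz]
  · exact hg y hy

theorem pl_not_polish_stmt0_general
    (G : Subgroup (I01 ≃ₜ I01))
    (gU : Set I01 → (I01 ≃ₜ I01))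
    (hgU : ∀ U : Set I01, IsOpen U → U.Nonempty →
      gU U ∈ G ∧ gU U ≠ 1 ∧ ∀ x ∉ U, gU U x = x)
    (W : Set I01) (hW : IsOpen W)
    (f : I01 ≃ₜ I01)
    (hcomm : ∀ W' : Set I01, W' ⊆ W → IsOpen W' → W'.Nonempty →
      f * gU W' = gU W' * f) :
    ∀ x ∈ W, f x = x := by
  intro x hxW
  by_contra hfx
  obtain ⟨U, hU, hxU, hUf⟩ := exists_isOpen_disjoint_preimage_of_apply_ne f.continuous hfx
  have hWU : IsOpen (W ∩ U) := hW.inter hU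
  have hne : (W ∩ U).Nonempty := ⟨x, hxW, hxU⟩
  obtain ⟨-, hg1, hgfix⟩ := hgU (W ∩ U) hWU hne
  have hfg : ∀ y, f (gU (W ∩ U) y) = gU (W ∩ U) (f y) := fun y =>
    (DFunLike.congr_fun (hcomm (W ∩ U) Set.inter_subset_left hWU hne) y :)
  refine hg1 (Homeomorph.ext fun y => ?_)
  exact eq_self_of_commute_of_disjoint_preimage f.surjective hfg hgfix
    (hUf.mono Set.inter_subset_right (Set.preimage_mono Set.inter_subset_right)) y

/-- Let `G` be a subgroup of `Homeo₊(I)` such that for every nonempty open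
`U ⊆ I` there is a non-identity element `gU U ∈ G` fixing `I \ U` pointwise.  If `W ⊆ I`
is open, `f ∈ G`, and `f` commutes with `gU W'` for every nonempty open `W' ⊆ W`, then
`f` fixes `W` pointwise. -/
theorem pl_not_polish_stmt0
    (G : Subgroup (I01 ≃ₜ I01))
    (hmono : ∀ g ∈ G, StrictMono ⇑(g : I01 ≃ₜ I01))
    (gU : Set I01 → (I01 ≃ₜ I01))
    (hgU : ∀ U : Set I01, IsOpen U → U.Nonempty →
      gU U ∈ G ∧ gU U ≠ 1 ∧ ∀ x ∉ U, gU U x = x)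
    (W : Set I01) (hW : IsOpen W)
    (f : I01 ≃ₜ I01) (hf : f ∈ G)
    (hcomm : ∀ W' : Set I01, W' ⊆ W → IsOpen W' → W'.Nonempty →
      f * gU W' = gU W' * f) :
    ∀ x ∈ W, f x = x :=
  pl_not_polish_stmt0_general G gU hgU W hW f hcomm
end

section
/- Let G be a subgroup of Homeo₊(I) such that for every nonempty open U ⊆ I there is a non-identity g_U ∈ G fixing I \ U pointwise. If τ is a Hausdorff group topology on G, then for all nonempty open sets U, V ⊆ I, the set C(U,V) = {f ∈ G : f(closure U) ⊆ closure V} is closed in (G, τ). -/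
open Set

/-!
Membership in `C(U,V)` is expressed purely group-theoretically: `f(closure U) ⊆ closure V`
holds iff every conjugate `f g f⁻¹` of an element `g ∈ G` supported in `U` commutes with every
`h ∈ G` supported off `closure V`. One direction is that homeomorphisms with disjoint supports
commute. Conversely, if some point of `U` is sent outside `closure V`, take `g` supported near
it; `f g f⁻¹` moves some point `z ∉ closure V`, hence moves a whole neighbourhood `W` of `z`
off itself, and any nontrivial `h` supported in `W \ closure V` fails to commute with it.
Each commutation condition `f g f⁻¹ h = h f g f⁻¹` is closed in a Hausdorff group topology.
-/

namespace Homeomorph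

variable {X : Type*} [TopologicalSpace X]

def IsSupportedIn (f : X ≃ₜ X) (S : Set X) : Prop := ∀ x ∉ S, f x = x

theorem IsSupportedIn.mono {f : X ≃ₜ X} {S T : Set X} (hf : f.IsSupportedIn S) (hST : S ⊆ T) :
    f.IsSupportedIn T :=
  fun x hx => hf x fun hxS => hx (hST hxS)

theorem IsSupportedIn.conj {g : X ≃ₜ X} {S : Set X} (hg : g.IsSupportedIn S) (f : X ≃ₜ X) :
    (f * g * f⁻¹).IsSupportedIn (f '' S) := by
  intro x hx
  have hx' : f.symm x ∉ S := fun h => hx ⟨_, h, f.apply_symm_apply x⟩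
  simp [hg _ hx']

theorem IsSupportedIn.exists_mem_apply_ne {g : X ≃ₜ X} {S : Set X} (hg : g.IsSupportedIn S)
    (hg1 : g ≠ 1) : ∃ t ∈ S, g t ≠ t := by
  by_contra! hfix
  exact hg1 <| Homeomorph.ext fun x => by
    by_cases hx : x ∈ S
    exacts [hfix x hx, hg x hx]

theorem commute_of_isSupportedIn_compl {f h : X ≃ₜ X} {S : Set X} (hf : f.IsSupportedIn S)
    (hh : h.IsSupportedIn Sᶜ) : Commute f h := by
  have hdisj : Equiv.Perm.Disjoint f.toEquiv h.toEquiv := fun x => by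
    by_cases hx : x ∈ S
    exacts [Or.inr (hh x (not_not_intro hx)), Or.inl (hf x hx)]
  exact Homeomorph.ext fun x => DFunLike.congr_fun hdisj.commute.eq x

theorem not_commute_of_isSupportedIn {a h : X ≃ₜ X} {W : Set X} (hh : h.IsSupportedIn W)
    (hh1 : h ≠ 1) (ha : MapsTo a W Wᶜ) : ¬Commute a h := by
  intro hcomm
  obtain ⟨w, hwW, hw⟩ := hh.exists_mem_apply_ne hh1
  refine hw (a.injective ?_)
  calc a (h w) = h (a w) := DFunLike.congr_fun hcomm.eq w
    _ = a w := hh _ (ha hwW)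

end Homeomorph

theorem exists_isOpen_mapsTo_compl {X : Type*} [TopologicalSpace X] [T2Space X] {a : X → X}
    (ha : Continuous a) {z : X} (hz : a z ≠ z) : ∃ W, IsOpen W ∧ z ∈ W ∧ MapsTo a W Wᶜ := by
  obtain ⟨A, B, hA, hB, hzA, hzB, hAB⟩ := t2_separation hz
  exact ⟨B ∩ a ⁻¹' A, hB.inter (hA.preimage ha), ⟨hzB, hzA⟩,
    fun w hw hwW => disjoint_left.mp hAB hw.2 hwW.1⟩

open Homeomorph in
theorem image_closure_subset_iff_forall_commute {X : Type*} [TopologicalSpace X] [T2Space X]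
    (G : Subgroup (X ≃ₜ X))
    (hG : ∀ U : Set X, IsOpen U → U.Nonempty → ∃ g ∈ G, g ≠ 1 ∧ g.IsSupportedIn U)
    {U K : Set X} (hU : IsOpen U) (hK : IsClosed K) (f : X ≃ₜ X) :
    f '' closure U ⊆ K ↔ ∀ g ∈ G, ∀ h ∈ G, g.IsSupportedIn U → h.IsSupportedIn Kᶜ →
      Commute (f * g * f⁻¹) h := by
  rw [f.image_closure, hK.closure_subset_iff]
  refine ⟨fun hfU g _ h _ hg hh => commute_of_isSupportedIn_compl ((hg.conj f).mono hfU) hh,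
    fun hcomm => ?_⟩
  by_contra hfU
  obtain ⟨_, ⟨y, hyU, rfl⟩, hyK⟩ := not_subset.mp hfU
  obtain ⟨g, hgG, hg1, hg⟩ :=
    hG (U ∩ f ⁻¹' Kᶜ) (hU.inter (hK.isOpen_compl.preimage f.continuous)) ⟨y, hyU, hyK⟩
  obtain ⟨t, htO, ht⟩ := hg.exists_mem_apply_ne hg1
  have hmoved : (f * g * f⁻¹) (f t) ≠ f t := by simpa using ht
  obtain ⟨W, hW, hftW, hmaps⟩ := exists_isOpen_mapsTo_compl (f * g * f⁻¹).continuous hmoved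
  obtain ⟨h, hhG, hh1, hh⟩ := hG (W ∩ Kᶜ) (hW.inter hK.isOpen_compl) ⟨f t, hftW, htO.2⟩
  exact not_commute_of_isSupportedIn hh hh1
    (hmaps.mono inter_subset_left (compl_subset_compl.2 inter_subset_left))
    (hcomm g hgG h hhG (hg.mono inter_subset_left) (hh.mono inter_subset_right))

theorem isClosed_setOf_commute_conj {G : Type*} [Group G] [TopologicalSpace G]
    [IsTopologicalGroup G] [T2Space G] (g h : G) : IsClosed {f : G | Commute (f * g * f⁻¹) h} :=
  isClosed_eq (((continuous_mul_const g).mul continuous_inv).mul continuous_const)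
    (continuous_const.mul ((continuous_mul_const g).mul continuous_inv))

theorem pl_not_polish_stmt2_general
    (G : Subgroup (I01 ≃ₜ I01))
    (hflex : ∀ U : Set I01, IsOpen U → U.Nonempty →
      ∃ g ∈ G, g ≠ 1 ∧ ∀ x ∉ U, (g : I01 ≃ₜ I01) x = x)
    (τ : TopologicalSpace G)
    (hT2 : @T2Space G τ)
    (hTG : @IsTopologicalGroup G τ _)
    (U V : Set I01) (hU : IsOpen U) :
    @IsClosed G τ {f : G | ⇑((f : I01 ≃ₜ I01)) '' closure U ⊆ closure V} := by
  have hC : {f : G | ⇑(f : I01 ≃ₜ I01) '' closure U ⊆ closure V} =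
      ⋂ (g : G) (h : G) (_ : (g : I01 ≃ₜ I01).IsSupportedIn U)
        (_ : (h : I01 ≃ₜ I01).IsSupportedIn (closure V)ᶜ), {f : G | Commute (f * g * f⁻¹) h} := by
    ext f
    simp only [mem_iInter, image_closure_subset_iff_forall_commute G hflex hU
      isClosed_closure, Subtype.forall, ← Submonoid.commute_coe_coe]
    rfl
  rw [hC]
  exact isClosed_iInter fun g => isClosed_iInter fun h => isClosed_iInter fun _ =>
    isClosed_iInter fun _ => isClosed_setOf_commute_conj g h

/-- Kallman's lemma: Let `G` be a subgroup of `Homeo₊(I)` such that for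
every nonempty open `U ⊆ I` there is a non-identity element of `G` fixing `I \ U`
pointwise.  If `τ` is a Hausdorff group topology on `G`, then for all nonempty open
`U, V ⊆ I`, the set `C(U,V) = {f ∈ G : f(closure U) ⊆ closure V}` is closed in `(G, τ)`. -/
theorem pl_not_polish_stmt2
    (G : Subgroup (I01 ≃ₜ I01))
    (hmono : ∀ g ∈ G, StrictMono ⇑(g : I01 ≃ₜ I01))
    (hflex : ∀ U : Set I01, IsOpen U → U.Nonempty →
      ∃ g ∈ G, g ≠ 1 ∧ ∀ x ∉ U, (g : I01 ≃ₜ I01) x = x)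
    (τ : TopologicalSpace G)
    (hT2 : @T2Space G τ)
    (hTG : @IsTopologicalGroup G τ _)
    (U V : Set I01) (hU : IsOpen U) (hUne : U.Nonempty)
    (hV : IsOpen V) (hVne : V.Nonempty) :
    @IsClosed G τ {f : G | ⇑((f : I01 ≃ₜ I01)) '' closure U ⊆ closure V} :=
  pl_not_polish_stmt2_general G hflex τ hT2 hTG U V hU
end

section
/- Let G be a topological group whose point-evaluations on I are continuous: that is, G is a subgroup of Homeo₊(I) equipped with a group topology τ such that for each x ∈ I the map g ↦ g(x) is continuous from (G,τ) to I. Then τ contains (is finer than) the compact-open topology on G. -/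
open Set

open Filter Topology

/-! Continuity of the point evaluations means `g x → g₀ x` as `g → g₀`. The maps are monotone
and the limit `g₀` is continuous, so around any `x` we may pinch `g x` and `g₀ x` between the values
at points `p ≤ x ≤ q` spanning a neighbourhood of `x` on which `g₀` varies little; the two
evaluations at `p` and `q` then control that whole neighbourhood (Pólya's theorem). Locally
uniform convergence is convergence in the compact-open topology. -/

theorem tendstoLocallyUniformly_of_monotone_of_tendsto_apply {ι α : Type*} [LinearOrder α]
    [TopologicalSpace α] [OrderTopology α] {l : Filter ι} {F : ι → α → ℝ} {f : α → ℝ}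
    (hF : ∀ i, Monotone (F i)) (hf : Monotone f) (hfc : Continuous f)
    (h : ∀ x, Tendsto (fun i => F i x) l (𝓝 (f x))) :
    TendstoLocallyUniformly F f l := by
  rw [Metric.tendstoLocallyUniformly_iff]
  intro ε hε x
  have hε3 : 0 < ε / 3 := by positivity
  obtain ⟨p, q, ⟨hpx, hxq⟩, hpq_nhds, hpq_sub⟩ := exists_Icc_mem_subset_of_mem_nhds
    (hfc.continuousAt.preimage_mem_nhds (Metric.ball_mem_nhds (f x) hε3))
  have hfp := hpq_sub ⟨le_rfl, hpx.trans hxq⟩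
  have hfq := hpq_sub ⟨hpx.trans hxq, le_rfl⟩
  refine ⟨Icc p q, hpq_nhds, ?_⟩
  filter_upwards [Metric.tendsto_nhds.1 (h p) _ hε3, Metric.tendsto_nhds.1 (h q) _ hε3]
    with i hFp hFq y ⟨hpy, hyq⟩
  simp only [mem_preimage, Metric.mem_ball, Real.dist_eq, abs_sub_lt_iff] at hfp hfq hFp hFq ⊢
  have hFpy := hF i hpy
  have hFyq := hF i hyq
  have hfpy := hf hpy
  have hfyq := hf hyq
  constructor <;> linarith

theorem pl_not_polish_stmt4_general
    (G : Subgroup (I01 ≃ₜ I01))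
    (hmono : ∀ g ∈ G, StrictMono ⇑(g : I01 ≃ₜ I01))
    (τ : TopologicalSpace G)
    (heval : ∀ x : I01, @Continuous G I01 τ _ (fun g : G => (g : I01 ≃ₜ I01) x)) :
    τ ≤ TopologicalSpace.induced
      (fun g : G => ContinuousMap.mk _ (g : I01 ≃ₜ I01).continuous)
      ContinuousMap.compactOpen := by
  let := τ
  rw [← continuous_iff_le_induced, continuous_iff_continuousAt]
  intro g₀
  have hmono_coe (g : G) : Monotone fun x => ((g : I01 ≃ₜ I01) x : ℝ) :=
    Subtype.mono_coe _ |>.comp (hmono g g.2).monotone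
  have hreal := tendstoLocallyUniformly_of_monotone_of_tendsto_apply
    (F := fun (g : G) x => ((g : I01 ≃ₜ I01) x : ℝ)) hmono_coe (hmono_coe g₀)
    (continuous_subtype_val.comp (g₀ : I01 ≃ₜ I01).continuous)
    fun x => (continuous_subtype_val.comp (heval x)).tendsto g₀
  -- The metric on `I01` is the restriction of that of `ℝ`.
  exact ContinuousMap.tendsto_iff_tendstoLocallyUniformly.2 <|
    Metric.tendstoLocallyUniformly_iff.2 fun ε hε x =>
      Metric.tendstoLocallyUniformly_iff.1 hreal ε hε x

/-- Arens: Let `G` be a subgroup of `Homeo₊(I)` equipped with a group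
topology `τ` such that every point-evaluation `g ↦ g(x)` is continuous.  Then `τ` is
finer than (i.e. contains) the compact-open topology on `G`. -/
theorem pl_not_polish_stmt4
    (G : Subgroup (I01 ≃ₜ I01))
    (hmono : ∀ g ∈ G, StrictMono ⇑(g : I01 ≃ₜ I01))
    (τ : TopologicalSpace G)
    (hTG : @IsTopologicalGroup G τ _)
    (heval : ∀ x : I01, @Continuous G I01 τ _ (fun g : G => (g : I01 ≃ₜ I01) x)) :
    τ ≤ TopologicalSpace.induced
      (fun g : G => ContinuousMap.mk _ (g : I01 ≃ₜ I01).continuous)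
      ContinuousMap.compactOpen :=
  pl_not_polish_stmt4_general G hmono τ heval
end

section
/- Let G be a group with a σ-algebra Σ making (G, Σ) a standard Borel group. Suppose there is a sequence (B_n) of subsets of G such that: (1) G = ⋃_n B_n; (2) each B_n is symmetric (B_n⁻¹ = B_n) and lies in Σ; (3) for each n there is m_n with B_n·B_n ⊆ B_{m_n}; (4) for each n and every sequence (g_k) of elements of G, there is f ∈ G with f ∉ ⋃_k B_n·g_k. Then there is no Polish group topology on G whose Borel σ-algebra equals Σ. -/
/-!
Suppose `τ` were such a topology. By the Baire category theorem some `B n` is non-meagre, and it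
is Borel, hence has the Baire property, so by Pettis's theorem `B n * (B n)⁻¹ = B n * B n` is a
neighbourhood of `1`; hence so is `B m ⊇ B n * B n`. A Polish space is Lindelöf, so countably many
right translates `B m * {g k}` cover `G`, contradicting (4).
-/

open Set Pointwise Topology Filter

theorem Set.smul_inter_self_nonempty_iff_mem_mul_inv {G : Type*} [Group G] {s : Set G} {x : G} :
    (x • s ∩ s).Nonempty ↔ x ∈ s * s⁻¹ := by
  simp only [smul_inter_nonempty_iff, mem_mul, mem_inv]
  constructor
  · rintro ⟨a, b, ⟨ha, hb⟩, rfl⟩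
    exact ⟨a, ha, b⁻¹, by simpa using hb, rfl⟩
  · rintro ⟨a, ha, b, hb, rfl⟩
    exact ⟨a, b⁻¹, ⟨ha, hb⟩, by simp⟩

theorem isMeagre_iff_residualEq_empty {X : Type*} [TopologicalSpace X] {s : Set X} :
    IsMeagre s ↔ s =ᵇ (∅ : Set X) :=
  eventuallyEq_empty.symm

theorem exists_not_isMeagre_of_iUnion_eq_univ {X ι : Type*} [TopologicalSpace X] [BaireSpace X]
    [Nonempty X] [Countable ι] {s : ι → Set X} (h : ⋃ i, s i = univ) : ∃ i, ¬IsMeagre (s i) := by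
  by_contra! hs
  exact not_isMeagre_of_isOpen isOpen_univ univ_nonempty (h ▸ isMeagre_iUnion hs)

theorem Filter.EventuallyEq.smul_set_residual {G X : Type*} [Group G] [MulAction G X]
    [TopologicalSpace X] [ContinuousConstSMul G X] {s t : Set X} (h : s =ᵇ t) (g : G) :
    g • s =ᵇ g • t := by
  rw [← preimage_smul_inv, ← preimage_smul_inv]
  exact h.comp_tendsto
    (tendsto_residual_of_isOpenMap (continuous_const_smul g⁻¹) (isOpenMap_smul g⁻¹))

/-- Pettis's theorem. For `g ∈ U * U⁻¹`, the set `g • A ∩ A` agrees up to a meagre set with the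
nonempty open set `g • U ∩ U`, so it is nonempty. -/
theorem mul_inv_mem_nhds_one_of_not_isMeagre {G : Type*} [Group G] [TopologicalSpace G]
    [IsTopologicalGroup G] [BaireSpace G] {A : Set G} (hA : BaireMeasurableSet A)
    (hA' : ¬IsMeagre A) : A * A⁻¹ ∈ 𝓝 1 := by
  obtain ⟨U, hU, hAU⟩ := hA.residualEq_isOpen
  have hU_ne : U.Nonempty :=
    nonempty_of_not_isMeagre fun hU' ↦ hA' (isMeagre_iff_residualEq_empty.2
      (hAU.trans (isMeagre_iff_residualEq_empty.1 hU')))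
  refine mem_of_superset ((hU.mul_right (t := U⁻¹)).mem_nhds ?_) fun g hg ↦ ?_
  · obtain ⟨u, hu⟩ := hU_ne
    exact ⟨u, hu, u⁻¹, inv_mem_inv.2 hu, mul_inv_cancel u⟩
  · rw [← smul_inter_self_nonempty_iff_mem_mul_inv] at hg ⊢
    have hU_nonmeagre : ¬IsMeagre (g • U ∩ U) :=
      not_isMeagre_of_isOpen ((hU.smul g).inter hU) hg
    refine nonempty_of_not_isMeagre fun hA_meagre ↦ hU_nonmeagre ?_
    rw [isMeagre_iff_residualEq_empty] at hA_meagre ⊢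
    exact ((hAU.smul_set_residual g).inter hAU).symm.trans hA_meagre

theorem exists_seq_iUnion_mul_singleton_eq_univ {G : Type*} [Group G] [TopologicalSpace G]
    [IsTopologicalGroup G] [LindelofSpace G] {V : Set G} (hV : V ∈ 𝓝 1) :
    ∃ g : ℕ → G, ⋃ k, V * {g k} = univ := by
  obtain ⟨T, hT, hTV⟩ := countable_cover_nhds fun x ↦ mul_singleton_mem_nhds_of_nhds_one x hV
  obtain ⟨x, hx, -⟩ := mem_iUnion₂.1 (hTV ▸ mem_univ (1 : G))
  obtain ⟨g, rfl⟩ := hT.exists_eq_range ⟨x, hx⟩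
  exact ⟨g, by simpa using hTV⟩

theorem pl_not_polish_stmt5_general
    {G : Type*} [Group G] [m : MeasurableSpace G]
    (B : ℕ → Set G)
    (hcover : (⋃ n, B n) = Set.univ)
    (hsymm : ∀ n, (B n)⁻¹ = B n)
    (hBorel : ∀ n, MeasurableSet (B n))
    (hsq : ∀ n, ∃ mn, B n * B n ⊆ B mn)
    (havoid : ∀ n, ∀ g : ℕ → G, ∃ f : G, f ∉ ⋃ k, B n * {g k}) :
    ¬ ∃ τ : TopologicalSpace G,
        @IsTopologicalGroup G τ _ ∧ @PolishSpace G τ ∧ @borel G τ = m := by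
  rintro ⟨τ, _, _, hτ⟩
  have : BorelSpace G := ⟨hτ.symm⟩
  obtain ⟨n, hn⟩ := exists_not_isMeagre_of_iUnion_eq_univ hcover
  obtain ⟨mn, hmn⟩ := hsq n
  have hB_nhds : B mn ∈ 𝓝 1 := by
    refine mem_of_superset
      (mul_inv_mem_nhds_one_of_not_isMeagre (hBorel n).baireMeasurableSet hn) ?_
    rwa [hsymm]
  obtain ⟨g, hg⟩ := exists_seq_iUnion_mul_singleton_eq_univ hB_nhds
  obtain ⟨f, hf⟩ := havoid mn g
  exact hf (hg ▸ mem_univ f)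

/-- Let `(G, Σ)` be a standard Borel group.  Suppose there is a sequence
`(B n)` of subsets of `G` such that (1) `G = ⋃ n, B n`; (2) each `B n` is symmetric and
Borel; (3) for each `n` there is `m` with `B n * B n ⊆ B m`; (4) for each `n` and every
sequence `(g k)` in `G` there is `f ∈ G` with `f ∉ ⋃ k, B n * {g k}`.  Then there is no
Polish group topology on `G` whose Borel σ-algebra equals `Σ`. -/
theorem pl_not_polish_stmt5
    {G : Type*} [Group G] [m : MeasurableSpace G] [StandardBorelSpace G]
    (hmul : Measurable fun p : G × G => p.1 * p.2)
    (hinv : Measurable fun g : G => g⁻¹)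
    (B : ℕ → Set G)
    (hcover : (⋃ n, B n) = Set.univ)
    (hsymm : ∀ n, (B n)⁻¹ = B n)
    (hBorel : ∀ n, MeasurableSet (B n))
    (hsq : ∀ n, ∃ mn, B n * B n ⊆ B mn)
    (havoid : ∀ n, ∀ g : ℕ → G, ∃ f : G, f ∉ ⋃ k, B n * {g k}) :
    ¬ ∃ τ : TopologicalSpace G,
        @IsTopologicalGroup G τ _ ∧ @PolishSpace G τ ∧ @borel G τ = m :=
  pl_not_polish_stmt5_general (m := m) B hcover hsymm hBorel hsq havoid
end

section
/- Fix y₀ ∈ (0,1) and n ≥ 1. Under the identification of the set A_n of increasing piecewise-linear homeomorphisms of I with exactly n break points with the open set X_n ⊆ ((0,1)×(0,1))ⁿ (via the ordered tuple of break point coordinates (x_i, f(x_i))), the set {f ∈ A_n : ∃ x₀ ∈ B(f), f(x₀) = y₀} corresponds to a nowhere dense subset of X_n. -/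
open Set

/-- The tuple `(z₁,…,z_n)` extended by the conventions `z₀ = (0,0)`, `z_{n+1} = (1,1)`
(and `(1,1)` beyond). -/
def extTuple (n : ℕ) (v : Fin n → ℝ × ℝ) : ℕ → ℝ × ℝ := fun j =>
  if h : 1 ≤ j ∧ j ≤ n then v ⟨j - 1, by omega⟩ else if j = 0 then (0, 0) else (1, 1)

/-- The tuple `(z₁,…,z_n) ∈ ((0,1)×(0,1))ⁿ` defines a piecewise linear map: writing
`z_i = (x_i, y_i)` and `z₀ = (0,0)`, `z_{n+1} = (1,1)`, we require each `z_i ∈ Z`,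
`x_i < x_{i+1}` and `y_i < y_{i+1}` for `1 ≤ i ≤ n`, and no three consecutive points
`z_{i-1}, z_i, z_{i+1}` (for `1 ≤ i ≤ n`) collinear. -/
def DefinesPL (n : ℕ) (v : Fin n → ℝ × ℝ) : Prop :=
  (∀ i, (v i).1 ∈ Set.Ioo (0 : ℝ) 1 ∧ (v i).2 ∈ Set.Ioo (0 : ℝ) 1) ∧
  (∀ j, 1 ≤ j → j ≤ n →
    (extTuple n v j).1 < (extTuple n v (j + 1)).1 ∧
    (extTuple n v j).2 < (extTuple n v (j + 1)).2) ∧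
  (∀ j, 1 ≤ j → j ≤ n →
    ((extTuple n v (j + 1)).2 - (extTuple n v j).2) *
        ((extTuple n v j).1 - (extTuple n v (j - 1)).1) ≠
      ((extTuple n v j).2 - (extTuple n v (j - 1)).2) *
        ((extTuple n v (j + 1)).1 - (extTuple n v j).1))

/-- The parameter space `X_n` of tuples defining piecewise linear maps. -/
def Xn (n : ℕ) : Set (Fin n → ℝ × ℝ) := {v | DefinesPL n v}

/-!
The coordinate maps `v ↦ y_i` are continuous and open on `X_n`, because `X_n` is open in
`(ℝ × ℝ)ⁿ`. Preimages of nowhere dense sets under continuous open maps are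
nowhere dense, so each `{y_i = y₀}` is nowhere dense in `X_n`, and so is their finite union.
-/

section Topology

variable {X Y : Type*} [TopologicalSpace X] [TopologicalSpace Y]

lemma IsOpenMap.isNowhereDense_preimage {f : X → Y} (hf : IsOpenMap f) (hfc : Continuous f)
    {s : Set Y} (hs : IsNowhereDense s) : IsNowhereDense (f ⁻¹' s) := by
  rw [IsNowhereDense, ← hf.preimage_closure_eq_closure_preimage hfc,
    ← hf.preimage_interior_eq_interior_preimage hfc, hs, preimage_empty]

lemma isNowhereDense_iUnion_of_finite {ι : Type*} [Finite ι] {s : ι → Set X}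
    (hs : ∀ i, IsNowhereDense (s i)) : IsNowhereDense (⋃ i, s i) := by
  have hclosed : IsClosed (⋃ i, closure (s i)) := isClosed_iUnion_of_finite fun _ ↦ isClosed_closure
  have hdense : Dense (⋃ i, closure (s i))ᶜ := by
    rw [compl_iUnion, ← sInter_range]
    refine (finite_range _).dense_sInter (forall_mem_range.2 fun i ↦ ?_)
      (forall_mem_range.2 fun i ↦ ?_)
    · exact isClosed_closure.isOpen_compl
    · exact (isClosed_isNowhereDense_iff_compl.1 ⟨isClosed_closure, (hs i).closure⟩).2
  exact ((isClosed_isNowhereDense_iff_compl.2 ⟨hclosed.isOpen_compl, hdense⟩).2).mono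
    (iUnion_mono fun _ ↦ subset_closure)

lemma isOpen_setOf_forall_Icc {p : ℕ → X → Prop}
    (hp : ∀ j, IsOpen {x | p j x}) (n : ℕ) : IsOpen {x | ∀ j, 1 ≤ j → j ≤ n → p j x} := by
  convert (finite_Icc 1 n).isOpen_biInter fun j _ ↦ hp j using 1
  ext
  simp [and_imp]

end Topology

@[fun_prop]
lemma continuous_extTuple (n j : ℕ) : Continuous fun v : Fin n → ℝ × ℝ ↦ extTuple n v j := by
  unfold extTuple
  split_ifs <;> fun_prop

lemma isOpen_Xn (n : ℕ) : IsOpen (Xn n) := by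
  refine IsOpen.and ?_ (.and ?_ ?_)
  · simp only [ofPred_forall]
    exact isOpen_iInter_of_finite fun i ↦
      (isOpen_Ioo.preimage (by fun_prop)).inter (isOpen_Ioo.preimage (by fun_prop))
  · exact isOpen_setOf_forall_Icc (fun j ↦ (isOpen_lt (by fun_prop) (by fun_prop)).and
      (isOpen_lt (by fun_prop) (by fun_prop))) n
  · exact isOpen_setOf_forall_Icc (fun j ↦ isOpen_ne_fun (by fun_prop) (by fun_prop)) n

lemma isOpenMap_Xn_snd_apply (n : ℕ) (i : Fin n) :
    IsOpenMap fun v : Xn n ↦ ((v : Fin n → ℝ × ℝ) i).2 :=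
  isOpenMap_snd.comp ((isOpenMap_eval i).comp (isOpen_Xn n).isOpenMap_subtype_val)

theorem pl_not_polish_stmt12_general (n : ℕ) (y₀ : ℝ) :
    IsNowhereDense {v : Xn n | ∃ i, ((v : Fin n → ℝ × ℝ) i).2 = y₀} := by
  rw [ofPred_exists]
  refine isNowhereDense_iUnion_of_finite fun i ↦ ?_
  have hpoint : IsNowhereDense {y₀} := by
    rw [isClosed_singleton.isNowhereDense_iff, interior_singleton]
  exact (isOpenMap_Xn_snd_apply n i).isNowhereDense_preimage
    (continuous_snd.comp ((continuous_apply i).comp continuous_subtype_val)) hpoint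

/-- Fix `y₀ ∈ (0,1)` and `n ≥ 1`.  Under the identification of `A_n` (the
increasing piecewise-linear homeomorphisms of `I` with exactly `n` break points) with
`X_n` via break-point tuples `(x_i, f(x_i))`, the set `{f ∈ A_n : ∃ x₀ ∈ B(f), f(x₀) = y₀}`
corresponds to the set of tuples with some `y`-coordinate equal to `y₀`, which is
nowhere dense in `X_n`. -/
theorem pl_not_polish_stmt12 (n : ℕ) (hn : 1 ≤ n) (y₀ : ℝ) (hy₀ : y₀ ∈ Set.Ioo (0 : ℝ) 1) :
    IsNowhereDense {v : Xn n | ∃ i, ((v : Fin n → ℝ × ℝ) i).2 = y₀} :=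
  pl_not_polish_stmt12_general n y₀
end

section
/- Fix n, m, k ∈ ℕ with k > m, and f ∈ PL₊(I) with exactly n break points. In the Polish topology τ₀ on PL₊(I), the set f·A_m ∩ A_k is meager in A_k. -/
open Set

noncomputable section
open scoped Classical

/-- The right-hand derivative of `f` at `x`. -/
def rightDeriv (f : ℝ → ℝ) (x : ℝ) : ℝ := derivWithin f (Set.Ioi x) x

/-- The left-hand derivative of `f` at `x`. -/
def leftDeriv (f : ℝ → ℝ) (x : ℝ) : ℝ := derivWithin f (Set.Iio x) x

/-- The slope ratio `f*(x) = f'₊(x) / f'₋(x)` of `f` at `x`. -/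
def slopeRatio (f : ℝ → ℝ) (x : ℝ) : ℝ := rightDeriv f x / leftDeriv f x

/-- The set of break points of `f`: points of `(0,1)` where the slope ratio is not `1`. -/
def breakPts (f : ℝ → ℝ) : Set ℝ := {x ∈ Set.Ioo (0 : ℝ) 1 | slopeRatio f x ≠ 1}

/-- `f : ℝ → ℝ` restricts to an increasing piecewise-linear self-homeomorphism of
`I = [0,1]` with finitely many changes of slope. -/
def IsPLHomeo (f : ℝ → ℝ) : Prop :=
  f 0 = 0 ∧ f 1 = 1 ∧ StrictMonoOn f (Set.Icc 0 1) ∧ ContinuousOn f (Set.Icc 0 1) ∧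
    Set.MapsTo f (Set.Icc 0 1) (Set.Icc 0 1) ∧ Set.SurjOn f (Set.Icc 0 1) (Set.Icc 0 1) ∧
    ∃ S : Finset ℝ, ∀ x ∈ Set.Icc (0 : ℝ) 1 \ (S : Set ℝ), ∃ a b : ℝ,
      ∀ᶠ y in nhdsWithin x (Set.Icc (0 : ℝ) 1), f y = a * y + b

/-- The set `A_m ⊆ PL₊(I)` of maps with exactly `m` break points, as a type. -/
def An (m : ℕ) : Type := {f : ℝ → ℝ // IsPLHomeo f ∧ (breakPts f).ncard = m}

/-- The tuple `Φ_m(f) = ((x₁, f x₁), …, (x_m, f x_m))` of break points of `f` listed in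
increasing order. -/
def breakTuple (m : ℕ) (f : ℝ → ℝ) : Fin m → ℝ × ℝ := fun i =>
  if h : (breakPts f).Finite then
    let l := h.toFinset.sort (· ≤ ·)
    if h2 : (i : ℕ) < l.length then (l.get ⟨i, h2⟩, f (l.get ⟨i, h2⟩)) else (0, 0)
  else (0, 0)

/-- The Polish topology `τ₀` on `A_m`, transported from the parameter space
`X_m ⊆ ((0,1)×(0,1))ᵐ` of break-point tuples via `Φ_m`. -/
instance (m : ℕ) : TopologicalSpace (An m) :=
  TopologicalSpace.induced (fun f : An m => breakTuple m f.1) inferInstance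

end

/-!
If `h = f ∘ g` has `k` break points and `g` only `m < k`, some break point `x` of `h` is not one
of `g`; by the chain rule for one-sided derivatives `g x` is then a break point of `f`, so the
break value `h x` lies in the finite set `f '' breakPts f`. Hence `f·A_m ∩ A_k` is covered by
finitely many sets `{h | the i-th break value of h is y}`. Each of them is closed with empty
interior: post-composing `h` with a PL bump that breaks only at `y` and moves it to `y + ε`
keeps the break points of `h` for small generic `ε`, and moves the break-point tuple continuously.
-/

open Filter Topology

variable {f g h ψ : ℝ → ℝ} {x a b : ℝ}

lemma StrictMonoOn.tendsto_nhdsGT_of_continuousAt {s : Set ℝ} (hm : StrictMonoOn h s)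
    (hs : s ∈ 𝓝 x) (hc : ContinuousAt h x) : Tendsto h (𝓝[>] x) (𝓝[>] (h x)) :=
  tendsto_nhdsWithin_iff.2 ⟨hc.tendsto.mono_left nhdsWithin_le_nhds, by
    filter_upwards [self_mem_nhdsWithin, nhdsWithin_le_nhds hs] with y hxy hy
    exact hm (mem_of_mem_nhds hs) hy hxy⟩

lemma StrictMonoOn.tendsto_nhdsLT_of_continuousAt {s : Set ℝ} (hm : StrictMonoOn h s)
    (hs : s ∈ 𝓝 x) (hc : ContinuousAt h x) : Tendsto h (𝓝[<] x) (𝓝[<] (h x)) :=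
  tendsto_nhdsWithin_iff.2 ⟨hc.tendsto.mono_left nhdsWithin_le_nhds, by
    filter_upwards [self_mem_nhdsWithin, nhdsWithin_le_nhds hs] with y hxy hy
    exact hm hy (mem_of_mem_nhds hs) hxy⟩

lemma rightDeriv_comp (hf : DifferentiableWithinAt ℝ f (Ioi (g x)) (g x))
    (hg : DifferentiableWithinAt ℝ g (Ioi x) x) (hgx : Tendsto g (𝓝[>] x) (𝓝[>] (g x))) :
    rightDeriv (f ∘ g) x = rightDeriv f (g x) * rightDeriv g x :=
  (show HasDerivWithinAt (f ∘ g) _ (Ioi x) x from HasDerivAtFilter.comp hf.hasDerivWithinAt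
    hg.hasDerivWithinAt (hgx.prodMap (tendsto_pure_pure _ _))).derivWithin
    (uniqueDiffWithinAt_Ioi x)

lemma leftDeriv_comp (hf : DifferentiableWithinAt ℝ f (Iio (g x)) (g x))
    (hg : DifferentiableWithinAt ℝ g (Iio x) x) (hgx : Tendsto g (𝓝[<] x) (𝓝[<] (g x))) :
    leftDeriv (f ∘ g) x = leftDeriv f (g x) * leftDeriv g x :=
  (show HasDerivWithinAt (f ∘ g) _ (Iio x) x from HasDerivAtFilter.comp hf.hasDerivWithinAt
    hg.hasDerivWithinAt (hgx.prodMap (tendsto_pure_pure _ _))).derivWithin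
    (uniqueDiffWithinAt_Iio x)

lemma rightDeriv_comp_of_eventually_affine (hh : Tendsto h (𝓝[>] x) (𝓝[≥] (h x)))
    (hψ : ∀ᶠ w in 𝓝[≥] (h x), ψ w = a * w + b) :
    rightDeriv (ψ ∘ h) x = a * rightDeriv h x := by
  have hev : ψ ∘ h =ᶠ[𝓝[>] x] fun y => a * h y + b := hh.eventually hψ
  rw [rightDeriv, hev.derivWithin_eq (hψ.self_of_nhdsWithin (mem_Ici.2 le_rfl)),
    derivWithin_add_const, derivWithin_const_mul_field, rightDeriv]

lemma leftDeriv_comp_of_eventually_affine (hh : Tendsto h (𝓝[<] x) (𝓝[≤] (h x)))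
    (hψ : ∀ᶠ w in 𝓝[≤] (h x), ψ w = a * w + b) :
    leftDeriv (ψ ∘ h) x = a * leftDeriv h x := by
  have hev : ψ ∘ h =ᶠ[𝓝[<] x] fun y => a * h y + b := hh.eventually hψ
  rw [leftDeriv, hev.derivWithin_eq (hψ.self_of_nhdsWithin (mem_Iic.2 le_rfl)),
    derivWithin_add_const, derivWithin_const_mul_field, leftDeriv]

lemma differentiableWithinAt_of_slopeRatio_eq_one (hf : slopeRatio f x = 1) :
    DifferentiableWithinAt ℝ f (Ioi x) x ∧ DifferentiableWithinAt ℝ f (Iio x) x := by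
  constructor <;> by_contra hd <;>
    simp [slopeRatio, rightDeriv, leftDeriv,
      derivWithin_zero_of_not_differentiableWithinAt hd] at hf

lemma slopeRatio_comp_eq_one (hgR : Tendsto g (𝓝[>] x) (𝓝[>] (g x)))
    (hgL : Tendsto g (𝓝[<] x) (𝓝[<] (g x))) (hg : slopeRatio g x = 1)
    (hf : slopeRatio f (g x) = 1) : slopeRatio (f ∘ g) x = 1 := by
  obtain ⟨hgR', hgL'⟩ := differentiableWithinAt_of_slopeRatio_eq_one hg
  obtain ⟨hfR', hfL'⟩ := differentiableWithinAt_of_slopeRatio_eq_one hf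
  rw [slopeRatio, rightDeriv_comp hfR' hgR' hgR, leftDeriv_comp hfL' hgL' hgL,
    mul_div_mul_comm]
  change slopeRatio f (g x) * slopeRatio g x = 1
  rw [hf, hg, one_mul]

lemma slopeRatio_eq_one_of_eventually_affine (ha : a ≠ 0)
    (hev : ∀ᶠ y in 𝓝 x, f y = a * y + b) : slopeRatio f x = 1 := by
  have hd : HasDerivAt f a x := by
    simpa using (((hasDerivAt_id x).const_mul a).add_const b).congr_of_eventuallyEq hev
  rw [slopeRatio, rightDeriv, leftDeriv,
    hd.hasDerivWithinAt.derivWithin (uniqueDiffWithinAt_Ioi x),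
    hd.hasDerivWithinAt.derivWithin (uniqueDiffWithinAt_Iio x), div_self ha]

namespace IsPLHomeo

lemma continuousAt (hh : IsPLHomeo h) (hx : x ∈ Ioo (0 : ℝ) 1) : ContinuousAt h x :=
  hh.2.2.2.1.continuousAt (Icc_mem_nhds hx.1 hx.2)

lemma tendsto_nhdsGT (hh : IsPLHomeo h) (hx : x ∈ Ioo (0 : ℝ) 1) :
    Tendsto h (𝓝[>] x) (𝓝[>] (h x)) :=
  hh.2.2.1.tendsto_nhdsGT_of_continuousAt (Icc_mem_nhds hx.1 hx.2) (hh.continuousAt hx)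

lemma tendsto_nhdsLT (hh : IsPLHomeo h) (hx : x ∈ Ioo (0 : ℝ) 1) :
    Tendsto h (𝓝[<] x) (𝓝[<] (h x)) :=
  hh.2.2.1.tendsto_nhdsLT_of_continuousAt (Icc_mem_nhds hx.1 hx.2) (hh.continuousAt hx)

lemma mapsTo_Ioo (hh : IsPLHomeo h) : MapsTo h (Ioo 0 1) (Ioo 0 1) := fun x hx => by
  obtain ⟨h0, h1, hm, -⟩ := hh
  have hxI := Ioo_subset_Icc_self hx
  exact ⟨h0 ▸ hm (left_mem_Icc.2 zero_le_one) hxI hx.1,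
    h1 ▸ hm hxI (right_mem_Icc.2 zero_le_one) hx.2⟩

lemma finite_breakPts (hh : IsPLHomeo h) : (breakPts h).Finite := by
  obtain ⟨S, hS⟩ := hh.2.2.2.2.2.2
  refine S.finite_toSet.subset fun x ⟨hx, hne⟩ => by_contra fun hxS => hne ?_
  obtain ⟨a, b, hab⟩ := hS x ⟨Ioo_subset_Icc_self hx, hxS⟩
  rw [nhdsWithin_eq_nhds.2 (Icc_mem_nhds hx.1 hx.2)] at hab
  refine slopeRatio_eq_one_of_eventually_affine (fun ha => ?_) hab
  obtain ⟨y, hy, hxy, hy1⟩ :=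
    ((hab.filter_mono nhdsWithin_le_nhds).and (Ioo_mem_nhdsGT hx.2)).exists
  have := hh.2.2.1 (Ioo_subset_Icc_self hx) ⟨(hx.1.trans hxy).le, hy1.le⟩ hxy
  simp [hy, hab.self_of_nhds, ha] at this

lemma comp (hf : IsPLHomeo f) (hg : IsPLHomeo g) : IsPLHomeo (f ∘ g) := by
  obtain ⟨hg0, hg1, hgm, hgc, hgmaps, hgsurj, Sg, hSg⟩ := hg
  obtain ⟨hf0, hf1, hfm, hfc, hfmaps, hfsurj, Sf, hSf⟩ := hf
  refine ⟨by simp [hg0, hf0], by simp [hg1, hf1],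
    fun x hx y hy hxy => hfm (hgmaps hx) (hgmaps hy) (hgm hx hy hxy),
    hfc.comp hgc hgmaps, hfmaps.comp hgmaps, hfsurj.comp hgsurj, ?_⟩
  have hpre : (Icc 0 1 ∩ g ⁻¹' Sf).Finite :=
    (Sf.finite_toSet.subset (image_subset_iff.2 fun _ hx => hx.2)).of_finite_image
      (hgm.injOn.mono inter_subset_left)
  refine ⟨Sg ∪ hpre.toFinset, fun x ⟨hxI, hxS⟩ => ?_⟩
  simp only [Finset.coe_union, Finite.coe_toFinset, mem_union, mem_inter_iff, mem_preimage,
    not_or, not_and] at hxS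
  obtain ⟨a, b, hab⟩ := hSg x ⟨hxI, hxS.1⟩
  obtain ⟨a', b', hab'⟩ := hSf (g x) ⟨hgmaps hxI, hxS.2 hxI⟩
  refine ⟨a' * a, a' * b + b', ?_⟩
  filter_upwards [hab, ((hgc x hxI).tendsto_nhdsWithin hgmaps).eventually hab'] with y hy hy'
  rw [Function.comp_apply, hy', hy]
  ring

end IsPLHomeo

lemma breakPts_comp_subset (hg : IsPLHomeo g) :
    breakPts (f ∘ g) ⊆ breakPts g ∪ g ⁻¹' breakPts f := by
  rintro x ⟨hx, hfg⟩
  by_contra hnot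
  simp only [mem_union, mem_preimage, breakPts, mem_ofPred_eq, not_or, not_and, not_not] at hnot
  exact hfg (slopeRatio_comp_eq_one (hg.tendsto_nhdsGT hx) (hg.tendsto_nhdsLT hx) (hnot.1 hx)
    (hnot.2 (hg.mapsTo_Ioo hx)))

lemma range_breakTuple {k : ℕ} (hfin : (breakPts h).Finite) (hcard : (breakPts h).ncard = k) :
    range (breakTuple k h) = (fun x => (x, h x)) '' breakPts h := by
  set l := hfin.toFinset.sort (· ≤ ·)
  have hlen : l.length = k := by
    rw [Finset.length_sort, ← ncard_eq_toFinset_card _ hfin, hcard]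
  have hΦ : breakTuple k h = (fun x => (x, h x)) ∘ l.get ∘ finCongr hlen.symm := by
    funext i
    simp [breakTuple, hfin, hlen, l]
  rw [hΦ, range_comp, (finCongr hlen.symm).surjective.range_comp, range_list_get]
  congr 1
  ext x
  simp [l]

lemma breakTuple_comp_of_breakPts_eq (hψ0 : ψ 0 = 0) (hB : breakPts (ψ ∘ h) = breakPts h)
    (m : ℕ) :
    breakTuple m (ψ ∘ h) = fun i => ((breakTuple m h i).1, ψ (breakTuple m h i).2) := by
  funext i
  unfold breakTuple
  rw [hB]
  by_cases hfin : (breakPts h).Finite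
  · simp only [dif_pos hfin]
    split_ifs <;> simp [hψ0]
  · simp [dif_neg hfin, hψ0]

noncomputable def tent (q z : ℝ) : ℝ := min (z / q) ((1 - z) / (1 - q))

/-- For small `ε`, a PL homeomorphism of `[0, 1]` with the single break point `q ↦ q + ε`. -/
noncomputable def bump (q ε z : ℝ) : ℝ := z + ε * tent q z

noncomputable def bumpSlopeRight (q ε z : ℝ) : ℝ :=
  if z < q then 1 + ε / q else 1 - ε / (1 - q)

noncomputable def bumpSlopeLeft (q ε z : ℝ) : ℝ :=
  if z ≤ q then 1 + ε / q else 1 - ε / (1 - q)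

lemma bumpSlopeRight_eq_left {q ε z : ℝ} (hz : z ≠ q) :
    bumpSlopeRight q ε z = bumpSlopeLeft q ε z := by
  simp [bumpSlopeRight, bumpSlopeLeft, lt_iff_le_and_ne, hz]

lemma tendsto_bumpSlopeRight_div_left (q z : ℝ) :
    Tendsto (fun ε => bumpSlopeRight q ε z / bumpSlopeLeft q ε z) (𝓝 0) (𝓝 1) := by
  have hR : Tendsto (fun ε => bumpSlopeRight q ε z) (𝓝 0) (𝓝 1) := by
    unfold bumpSlopeRight; split_ifs <;> exact Continuous.tendsto' (by fun_prop) _ _ (by simp)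
  have hL : Tendsto (fun ε => bumpSlopeLeft q ε z) (𝓝 0) (𝓝 1) := by
    unfold bumpSlopeLeft; split_ifs <;> exact Continuous.tendsto' (by fun_prop) _ _ (by simp)
  rw [← div_one (1 : ℝ)]
  exact hR.div hL one_ne_zero

section Bump

variable {q ε : ℝ} (hq : q ∈ Ioo (0 : ℝ) 1)
include hq

lemma bump_of_le {w : ℝ} (hw : w ≤ q) : bump q ε w = (1 + ε / q) * w := by
  have hq1 : 0 < 1 - q := sub_pos.2 hq.2
  rw [bump, tent, min_eq_left ((div_le_div_iff₀ hq.1 hq1).2 (by nlinarith))]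
  ring

lemma bump_of_ge {w : ℝ} (hw : q ≤ w) :
    bump q ε w = (1 - ε / (1 - q)) * w + ε / (1 - q) := by
  have hq1 : 0 < 1 - q := sub_pos.2 hq.2
  rw [bump, tent, min_eq_right ((div_le_div_iff₀ hq1 hq.1).2 (by nlinarith))]
  ring

lemma bump_zero : bump q ε 0 = 0 := by
  rw [bump_of_le hq hq.1.le, mul_zero]

lemma bump_one : bump q ε 1 = 1 := by
  have hq1 : 1 - q ≠ 0 := (sub_pos.2 hq.2).ne'
  rw [bump_of_ge hq hq.2.le]
  field_simp
  ring

lemma bump_self : bump q ε q = q + ε := by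
  rw [bump_of_le hq le_rfl]
  field_simp [hq.1.ne']

lemma bump_eventually_right (z : ℝ) :
    ∃ b, ∀ᶠ w in 𝓝[≥] z, bump q ε w = bumpSlopeRight q ε z * w + b := by
  rcases lt_or_ge z q with hz | hz
  · refine ⟨0, ?_⟩
    filter_upwards [nhdsWithin_le_nhds (Iio_mem_nhds hz)] with w hw
    rw [bumpSlopeRight, if_pos hz, bump_of_le hq (le_of_lt hw), add_zero]
  · refine ⟨ε / (1 - q), ?_⟩
    filter_upwards [self_mem_nhdsWithin] with w hw
    rw [bumpSlopeRight, if_neg hz.not_gt, bump_of_ge hq (hz.trans hw)]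

lemma bump_eventually_left (z : ℝ) :
    ∃ b, ∀ᶠ w in 𝓝[≤] z, bump q ε w = bumpSlopeLeft q ε z * w + b := by
  rcases le_or_gt z q with hz | hz
  · refine ⟨0, ?_⟩
    filter_upwards [self_mem_nhdsWithin] with w hw
    rw [bumpSlopeLeft, if_pos hz, bump_of_le hq (le_trans hw hz), add_zero]
  · refine ⟨ε / (1 - q), ?_⟩
    filter_upwards [nhdsWithin_le_nhds (Ioi_mem_nhds hz)] with w hw
    rw [bumpSlopeLeft, if_neg hz.not_ge, bump_of_ge hq (le_of_lt hw)]

lemma slopeRatio_bump_comp (hh : IsPLHomeo h) (hx : x ∈ Ioo (0 : ℝ) 1) :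
    slopeRatio (bump q ε ∘ h) x =
      bumpSlopeRight q ε (h x) / bumpSlopeLeft q ε (h x) * slopeRatio h x := by
  obtain ⟨bR, hR⟩ := bump_eventually_right hq (ε := ε) (h x)
  obtain ⟨bL, hL⟩ := bump_eventually_left hq (ε := ε) (h x)
  rw [slopeRatio, rightDeriv_comp_of_eventually_affine
      ((hh.tendsto_nhdsGT hx).mono_right (nhdsWithin_mono _ Ioi_subset_Ici_self)) hR,
    leftDeriv_comp_of_eventually_affine
      ((hh.tendsto_nhdsLT hx).mono_right (nhdsWithin_mono _ Iio_subset_Iic_self)) hL,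
    mul_div_mul_comm, slopeRatio]

lemma bump_slopes_pos (hε : ε ∈ Ioo (-q) (1 - q)) :
    0 < 1 + ε / q ∧ 0 < 1 - ε / (1 - q) := by
  constructor
  · have : -1 < ε / q := by rw [lt_div_iff₀ hq.1]; linarith [hε.1]
    linarith
  · have : ε / (1 - q) < 1 := by rw [div_lt_one (sub_pos.2 hq.2)]; exact hε.2
    linarith

lemma bumpSlopeLeft_pos (hε : ε ∈ Ioo (-q) (1 - q)) (z : ℝ) : 0 < bumpSlopeLeft q ε z := by
  unfold bumpSlopeLeft
  split_ifs
  exacts [(bump_slopes_pos hq hε).1, (bump_slopes_pos hq hε).2]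

lemma isPLHomeo_bump (hε : ε ∈ Ioo (-q) (1 - q)) : IsPLHomeo (bump q ε) := by
  obtain ⟨hs₁, hs₂⟩ := bump_slopes_pos hq hε
  have hmono : StrictMono (bump q ε) := StrictMonoOn.Iic_union_Ici (a := q)
    (fun w hw v hv hwv => by
      rw [bump_of_le hq hw, bump_of_le hq hv]; exact mul_lt_mul_of_pos_left hwv hs₁)
    (fun w hw v hv hwv => by
      rw [bump_of_ge hq hw, bump_of_ge hq hv]; gcongr)
  have hcont : Continuous (bump q ε) := by unfold bump tent; fun_prop
  refine ⟨bump_zero hq, bump_one hq, hmono.strictMonoOn _, hcont.continuousOn,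
    fun z hz => ⟨bump_zero hq (ε := ε) ▸ hmono.monotone hz.1,
      bump_one hq (ε := ε) ▸ hmono.monotone hz.2⟩, ?_, ⟨{q}, fun x hx => ?_⟩⟩
  · have := intermediate_value_Icc zero_le_one hcont.continuousOn
    rwa [bump_zero hq, bump_one hq] at this
  rcases lt_or_gt_of_ne (show x ≠ q by simpa using hx.2) with hxq | hxq
  · refine ⟨1 + ε / q, 0, ?_⟩
    filter_upwards [mem_nhdsWithin_of_mem_nhds (Iio_mem_nhds hxq)] with w hw
    rw [bump_of_le hq (le_of_lt hw), add_zero]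
  · refine ⟨1 - ε / (1 - q), ε / (1 - q), ?_⟩
    filter_upwards [mem_nhdsWithin_of_mem_nhds (Ioi_mem_nhds hxq)] with w hw
    rw [bump_of_ge hq (le_of_lt hw)]

/-- The slope ratio of `h` at `x` is multiplied by the factor of `slopeRatio_bump_comp`, which
is `1` unless `h x = q` and tends to `1` as `ε → 0`. -/
lemma eventually_breakPts_bump_comp (hh : IsPLHomeo h)
    (hqb : ∀ x ∈ Ioo (0 : ℝ) 1, h x = q → x ∈ breakPts h) :
    ∀ᶠ ε in 𝓝 0, IsPLHomeo (bump q ε) ∧ breakPts (bump q ε ∘ h) = breakPts h := by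
  have hsmall : Ioo (-q) (1 - q) ∈ 𝓝 (0 : ℝ) :=
    Ioo_mem_nhds (neg_neg_of_pos hq.1) (sub_pos.2 hq.2)
  have hgeneric : ∀ᶠ ε in 𝓝 0, ∀ x ∈ breakPts h,
      bumpSlopeRight q ε (h x) / bumpSlopeLeft q ε (h x) * slopeRatio h x ≠ 1 :=
    (eventually_all_finite hh.finite_breakPts).2 fun x hx =>
      ((tendsto_bumpSlopeRight_div_left q (h x)).mul_const _).eventually_ne
        (by simpa using hx.2)
  filter_upwards [hsmall, hgeneric] with ε hε hgen
  refine ⟨isPLHomeo_bump hq hε, ?_⟩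
  ext x
  simp only [breakPts, mem_sep_iff]
  refine and_congr_right fun hx => ?_
  rw [slopeRatio_bump_comp hq hh hx]
  by_cases hxb : x ∈ breakPts h
  · exact iff_of_true (hgen x hxb) hxb.2
  · have hρ : slopeRatio h x = 1 := not_not.1 fun hne => hxb ⟨hx, hne⟩
    rw [bumpSlopeRight_eq_left fun hxq => hxb (hqb x hx hxq),
      div_self (bumpSlopeLeft_pos hq hε _).ne', hρ, mul_one]

end Bump

lemma isNowhereDense_setOf_breakTuple_snd_eq (k : ℕ) (i : Fin k) (y : ℝ) :
    IsNowhereDense {h : An k | (breakTuple k h.1 i).2 = y} := by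
  set C := {h : An k | (breakTuple k h.1 i).2 = y}
  have hΦ : Continuous fun h : An k => breakTuple k h.1 := continuous_induced_dom
  have hclosed : IsClosed C := isClosed_eq ((continuous_apply i).comp hΦ).snd continuous_const
  rw [hclosed.isNowhereDense_iff]
  refine eq_empty_of_forall_notMem fun h hint => ?_
  obtain ⟨hh, hcard⟩ := h.2
  have hy : (breakTuple k h.1 i).2 = y := interior_subset (s := C) hint
  rw [mem_interior_iff_mem_nhds, nhds_induced, mem_comap] at hint
  obtain ⟨t, ht, hts⟩ := hint
  obtain ⟨x₀, hx₀, hx₀i⟩ : breakTuple k h.1 i ∈ (fun x => (x, h.1 x)) '' breakPts h.1 :=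
    range_breakTuple hh.finite_breakPts hcard ▸ mem_range_self i
  have hq : h.1 x₀ ∈ Ioo (0 : ℝ) 1 := hh.mapsTo_Ioo hx₀.1
  have hqb : ∀ x ∈ Ioo (0 : ℝ) 1, h.1 x = h.1 x₀ → x ∈ breakPts h.1 := fun x hx hxq =>
    hh.2.2.1.injOn (Ioo_subset_Icc_self hx) (Ioo_subset_Icc_self hx₀.1) hxq ▸ hx₀
  have htuple : Tendsto
      (fun ε j => ((breakTuple k h.1 j).1, bump (h.1 x₀) ε (breakTuple k h.1 j).2))
      (𝓝 0) (𝓝 (breakTuple k h.1)) :=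
    Continuous.tendsto' (by unfold bump; fun_prop) _ _ (by simp [bump])
  obtain ⟨ε, ⟨⟨hPL, hB⟩, hεt⟩, hε0⟩ :=
    (((eventually_breakPts_bump_comp hq hh hqb).and (htuple.eventually ht)).filter_mono
      nhdsWithin_le_nhds |>.and self_mem_nhdsWithin).exists (f := 𝓝[≠] (0 : ℝ))
  have hΦε := breakTuple_comp_of_breakPts_eq (bump_zero hq) hB k
  have hmem : (breakTuple k (bump (h.1 x₀) ε ∘ h.1) i).2 = y :=
    hts (a := ⟨bump (h.1 x₀) ε ∘ h.1, hPL.comp hh, hB ▸ hcard⟩)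
      (show breakTuple k (bump (h.1 x₀) ε ∘ h.1) ∈ t by rwa [hΦε])
  simp only [hΦε, ← hy, ← hx₀i, bump_self hq] at hmem
  exact hε0 (by simpa using hmem)

theorem pl_not_polish_stmt14_general (m k : ℕ) (hk : k > m) (f : ℝ → ℝ)
    (hf : IsPLHomeo f) :
    IsMeagre {h : An k | ∃ g : ℝ → ℝ, IsPLHomeo g ∧ (breakPts g).ncard = m ∧
      h.1 = f ∘ g} := by
  refine IsMeagre.mono ?_ (isMeagre_iUnion fun i : Fin k =>
    isMeagre_biUnion (hf.finite_breakPts.image f).countable fun y _ =>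
      (isNowhereDense_setOf_breakTuple_snd_eq k i y).isMeagre)
  rintro h ⟨g, hg, hgm, hfg⟩
  obtain ⟨hh, hcard⟩ := h.2
  obtain ⟨x, hxh, hxg⟩ : ∃ x ∈ breakPts h.1, x ∉ breakPts g := not_subset.1 fun hsub => by
    have := ncard_le_ncard hsub hg.finite_breakPts
    omega
  have hgx : g x ∈ breakPts f := (breakPts_comp_subset hg (hfg ▸ hxh)).resolve_left hxg
  obtain ⟨i, hi⟩ : (x, h.1 x) ∈ range (breakTuple k h.1) :=
    range_breakTuple hh.finite_breakPts hcard ▸ mem_image_of_mem _ hxh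
  simp only [mem_iUnion]
  exact ⟨i, f (g x), mem_image_of_mem f hgx,
    show (breakTuple k h.1 i).2 = _ by rw [hi, hfg]; rfl⟩

/-- Fix `n, m, k ∈ ℕ` with `k > m`, and `f ∈ PL₊(I)` with exactly `n`
break points.  In the Polish topology `τ₀` on `PL₊(I)`, the set `f·A_m ∩ A_k` is meager
in `A_k`. -/
theorem pl_not_polish_stmt14 (n m k : ℕ) (hk : k > m) (f : ℝ → ℝ)
    (hf : IsPLHomeo f) (hfn : (breakPts f).ncard = n) :
    IsMeagre {h : An k | ∃ g : ℝ → ℝ, IsPLHomeo g ∧ (breakPts g).ncard = m ∧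
      h.1 = f ∘ g} :=
  pl_not_polish_stmt14_general m k hk f hf
end
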